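/- arXiv:2002.12309 — 3 statements merged into one kernel-verified Lean document; each statement's English description precedes it below -/
import Mathlib

section
/- Let λ be a real number and v a real vector indexed by the directed edges of G with Bv = λv and vᵀPv = 1, and let v̄ = (v¹, …, vⁿ) where vⁱ = Σ_j a_{ij} v_{j→i}, with v̄ ≠ 0. Let f ∈ ℝⁿ be parallel to v̄ (f = (‖f‖/‖v̄‖) v̄) with ‖f‖² = 1/(λ² + 1) (so that (f, −λf) is a unit vector). Then ‖v̄‖² (1 − fᵀ D f) = λ(λ² − 1) ‖f‖², where D is the diagonal matrix of node degrees of G; equivalently, if fᵀ D f ≠ 1, ‖v̄‖ = μ ‖f‖ with μ = sqrt(λ(λ² − 1)/(1 − fᵀ D f)). -/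
open Matrix

/-- The non-backtracking matrix of a simple graph `G`: rows and columns are indexed by
darts (directed edges); entry `(k→l, i→j)` is `δ_{jk} (1 - δ_{il})`. -/
def nbMatrix {V : Type*} [DecidableEq V] (G : SimpleGraph V) :
    Matrix G.Dart G.Dart ℝ := fun r c =>
  (if c.toProd.2 = r.toProd.1 then (1 : ℝ) else 0) *
  (if c.toProd.1 = r.toProd.2 then 0 else 1)


/-- The edge-swap (involution) matrix `P` on vectors indexed by the darts of `G`:
`(Pz)_{i→j} = z_{j→i}`. -/
def swapMat {V : Type*} [DecidableEq V] (G : SimpleGraph V) :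
    Matrix G.Dart G.Dart ℝ := fun r s => if s = r.symm then 1 else 0

/-- `vⁱ = Σ_j a_{ij} v_{j→i}`: the sum of the entries of `v` over darts pointing at `i`. -/
def vertSum {V : Type*} [Fintype V] [DecidableEq V] (G : SimpleGraph V) [DecidableRel G.Adj]
    (v : G.Dart → ℝ) (i : V) : ℝ :=
  ∑ e : G.Dart, if e.toProd.2 = i then v e else 0

open Finset

/-
The eigen-equation `Bv = λv` reads `λ v_{k→l} + v_{l→k} = vᵏ` dart by dart. Pairing it with
`v_{l→k}` and summing over all darts gives `‖v̄‖² = λ vᵀPv + ‖v‖²`; squaring it and summing gives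
`Σ_i deg(i) (vⁱ)² = (λ² + 1)‖v‖² + 2λ vᵀPv`. Eliminating `‖v‖²` with `vᵀPv = 1` yields
`(λ² + 1)‖v̄‖² - v̄ᵀDv̄ = λ(λ² - 1)`, which becomes the claim after scaling `v̄` to `f`, since
`(λ² + 1)‖f‖² = 1`.
-/

namespace SimpleGraph

variable {V : Type*} (G : SimpleGraph V)

theorem sum_dart_symm [Fintype G.Dart] {M : Type*} [AddCommMonoid M] (g : G.Dart → M) :
    ∑ d : G.Dart, g d.symm = ∑ d, g d :=
  Dart.symm_involutive.bijective.sum_comp g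

variable [DecidableEq V]

theorem nbMatrix_apply (r c : G.Dart) :
    nbMatrix G r c = (if c.snd = r.fst then 1 else 0) - if c = r.symm then 1 else 0 := by
  simp only [nbMatrix, Dart.ext_iff, Prod.ext_iff, Dart.symm_toProd, Prod.fst_swap,
    Prod.snd_swap]
  split_ifs <;> simp_all

variable [Fintype V] [DecidableRel G.Adj]

theorem sum_dart_fst {M : Type*} [AddCommMonoid M] (g : V → M) :
    ∑ d : G.Dart, g d.fst = ∑ i, G.degree i • g i := by
  rw [← Finset.sum_fiberwise_of_maps_to (g := fun d : G.Dart => d.fst) fun d _ => mem_univ _]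
  refine Finset.sum_congr rfl fun i _ => ?_
  rw [Finset.sum_congr rfl fun d hd => by rw [(mem_filter.mp hd).2], sum_const,
    dart_fst_fiber_card_eq_degree]

theorem dotProduct_vertSum (w : V → ℝ) (v : G.Dart → ℝ) :
    w ⬝ᵥ vertSum G v = ∑ d, w d.snd * v d := by
  simp only [dotProduct, vertSum, mul_sum, mul_ite, mul_zero]
  rw [sum_comm]
  simp

theorem nbMatrix_mulVec_apply (v : G.Dart → ℝ) (d : G.Dart) :
    (nbMatrix G *ᵥ v) d = vertSum G v d.fst - v d.symm := by
  simp [mulVec, dotProduct, nbMatrix_apply, sub_mul, sum_sub_distrib, vertSum]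

theorem dotProduct_swapMat_mulVec (v : G.Dart → ℝ) :
    v ⬝ᵥ swapMat G *ᵥ v = ∑ d, v d * v d.symm := by
  simp [mulVec, dotProduct, swapMat]

variable {G} {lam : ℝ} {v : G.Dart → ℝ}

theorem vertSum_fst_of_nbMatrix_mulVec (heig : nbMatrix G *ᵥ v = lam • v) (d : G.Dart) :
    vertSum G v d.fst = lam * v d + v d.symm := by
  have h := congrFun heig d
  rw [nbMatrix_mulVec_apply, Pi.smul_apply, smul_eq_mul] at h
  linarith

theorem vertSum_dotProduct_self_of_nbMatrix_mulVec (heig : nbMatrix G *ᵥ v = lam • v) :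
    vertSum G v ⬝ᵥ vertSum G v = lam * ∑ d, v d * v d.symm + ∑ d, v d ^ 2 := by
  calc vertSum G v ⬝ᵥ vertSum G v
      = ∑ d : G.Dart, vertSum G v d.symm.snd * v d.symm := by
        rw [dotProduct_vertSum, sum_dart_symm G fun d => vertSum G v d.snd * v d]
    _ = ∑ d, (lam * (v d * v d.symm) + v d.symm ^ 2) := by
        refine Finset.sum_congr rfl fun d _ => ?_
        rw [Dart.symm_toProd, Prod.snd_swap, vertSum_fst_of_nbMatrix_mulVec heig]
        ring
    _ = lam * ∑ d, v d * v d.symm + ∑ d, v d ^ 2 := by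
        rw [sum_add_distrib, ← mul_sum, sum_dart_symm G fun d => v d ^ 2]

theorem sum_degree_mul_vertSum_sq_of_nbMatrix_mulVec (heig : nbMatrix G *ᵥ v = lam • v) :
    ∑ i, (G.degree i : ℝ) * vertSum G v i ^ 2 =
      (lam ^ 2 + 1) * ∑ d, v d ^ 2 + 2 * lam * ∑ d, v d * v d.symm := by
  calc ∑ i, (G.degree i : ℝ) * vertSum G v i ^ 2
      = ∑ d : G.Dart, vertSum G v d.fst ^ 2 := by
        simp only [sum_dart_fst G fun i => vertSum G v i ^ 2, nsmul_eq_mul]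
    _ = ∑ d, (lam ^ 2 * v d ^ 2 + 2 * lam * (v d * v d.symm) + v d.symm ^ 2) := by
        refine Finset.sum_congr rfl fun d _ => ?_
        rw [vertSum_fst_of_nbMatrix_mulVec heig]
        ring
    _ = (lam ^ 2 + 1) * ∑ d, v d ^ 2 + 2 * lam * ∑ d, v d * v d.symm := by
        rw [sum_add_distrib, sum_add_distrib, ← mul_sum, ← mul_sum,
          sum_dart_symm G fun d => v d ^ 2]
        ring

theorem sq_add_one_mul_vertSum_dotProduct_self_sub (heig : nbMatrix G *ᵥ v = lam • v) :
    (lam ^ 2 + 1) * (vertSum G v ⬝ᵥ vertSum G v) - ∑ i, (G.degree i : ℝ) * vertSum G v i ^ 2 =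
      lam * (lam ^ 2 - 1) * (v ⬝ᵥ swapMat G *ᵥ v) := by
  rw [vertSum_dotProduct_self_of_nbMatrix_mulVec heig,
    sum_degree_mul_vertSum_sq_of_nbMatrix_mulVec heig, dotProduct_swapMat_mulVec]
  ring

end SimpleGraph

theorem dotProduct_diagonal_mulVec_self {ι : Type*} [Fintype ι] [DecidableEq ι] (w x : ι → ℝ) :
    x ⬝ᵥ diagonal w *ᵥ x = ∑ i, w i * x i ^ 2 := by
  simp only [dotProduct, mulVec_diagonal]
  exact Finset.sum_congr rfl fun i _ => by ring

theorem Real.sqrt_eq_sqrt_div_mul_sqrt {a b q L : ℝ} (hb : 0 < b) (hq : q ≠ 0)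
    (h : a * q = L * b) : √a = √(L / q) * √b := by
  have hLq : L / q = a / b := by
    rw [div_eq_div_iff hq hb.ne']
    linarith
  rw [hLq, Real.sqrt_div' a hb.le, div_mul_cancel₀ _ (Real.sqrt_pos.mpr hb).ne']

theorem vbar_norm_mu_f_general {V : Type*} [Fintype V] [DecidableEq V]
    (G : SimpleGraph V) [DecidableRel G.Adj] (lam : ℝ) (v : G.Dart → ℝ)
    (heig : (nbMatrix G).mulVec v = lam • v)
    (hnorm : v ⬝ᵥ (swapMat G).mulVec v = 1)
    (vbar : V → ℝ) (hvbar : vbar = fun i => vertSum G v i)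
    (f : V → ℝ)
    (hf : f = (Real.sqrt (f ⬝ᵥ f) / Real.sqrt (vbar ⬝ᵥ vbar)) • vbar)
    (hfnorm : f ⬝ᵥ f = 1 / (lam ^ 2 + 1)) :
    (vbar ⬝ᵥ vbar) *
        (1 - f ⬝ᵥ (Matrix.diagonal fun i => (G.degree i : ℝ)).mulVec f) =
      lam * (lam ^ 2 - 1) * (f ⬝ᵥ f) ∧
    (f ⬝ᵥ (Matrix.diagonal fun i => (G.degree i : ℝ)).mulVec f ≠ 1 →
      Real.sqrt (vbar ⬝ᵥ vbar) =
        Real.sqrt (lam * (lam ^ 2 - 1) /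
            (1 - f ⬝ᵥ (Matrix.diagonal fun i => (G.degree i : ℝ)).mulVec f)) *
          Real.sqrt (f ⬝ᵥ f)) := by
  replace hvbar : vbar = vertSum G v := hvbar
  have hkey := SimpleGraph.sq_add_one_mul_vertSum_dotProduct_self_sub heig
  rw [hnorm, mul_one, ← hvbar] at hkey
  obtain ⟨c, hc⟩ : ∃ c : ℝ, f = c • vbar := ⟨_, hf⟩
  have hff : f ⬝ᵥ f = c ^ 2 * (vbar ⬝ᵥ vbar) := by
    rw [hc, smul_dotProduct, dotProduct_smul, smul_eq_mul, smul_eq_mul]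
    ring
  have hfDf : f ⬝ᵥ diagonal (fun i => (G.degree i : ℝ)) *ᵥ f =
      c ^ 2 * ∑ i, (G.degree i : ℝ) * vbar i ^ 2 := by
    simp only [dotProduct_diagonal_mulVec_self, hc, Pi.smul_apply, smul_eq_mul, mul_sum]
    exact Finset.sum_congr rfl fun i _ => by ring
  have hscale : c ^ 2 * (vbar ⬝ᵥ vbar) * (lam ^ 2 + 1) = 1 := by
    rw [← hff, hfnorm]
    field_simp
  have hmain : (vbar ⬝ᵥ vbar) * (1 - f ⬝ᵥ diagonal (fun i => (G.degree i : ℝ)) *ᵥ f) =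
      lam * (lam ^ 2 - 1) * (f ⬝ᵥ f) := by
    rw [hfDf, hff]
    linear_combination (-(vbar ⬝ᵥ vbar)) * hscale + c ^ 2 * (vbar ⬝ᵥ vbar) * hkey
  refine ⟨hmain, fun hne => Real.sqrt_eq_sqrt_div_mul_sqrt ?_ (sub_ne_zero.mpr hne.symm) hmain⟩
  rw [hfnorm]
  positivity

theorem vbar_norm_mu_f {V : Type*} [Fintype V] [DecidableEq V]
    (G : SimpleGraph V) [DecidableRel G.Adj] (lam : ℝ) (v : G.Dart → ℝ)
    (heig : (nbMatrix G).mulVec v = lam • v)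
    (hnorm : v ⬝ᵥ (swapMat G).mulVec v = 1)
    (vbar : V → ℝ) (hvbar : vbar = fun i => vertSum G v i) (hvbar0 : vbar ≠ 0)
    (f : V → ℝ)
    (hf : f = (Real.sqrt (f ⬝ᵥ f) / Real.sqrt (vbar ⬝ᵥ vbar)) • vbar)
    (hfnorm : f ⬝ᵥ f = 1 / (lam ^ 2 + 1)) :
    (vbar ⬝ᵥ vbar) *
        (1 - f ⬝ᵥ (Matrix.diagonal fun i => (G.degree i : ℝ)).mulVec f) =
      lam * (lam ^ 2 - 1) * (f ⬝ᵥ f) ∧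
    (f ⬝ᵥ (Matrix.diagonal fun i => (G.degree i : ℝ)).mulVec f ≠ 1 →
      Real.sqrt (vbar ⬝ᵥ vbar) =
        Real.sqrt (lam * (lam ^ 2 - 1) /
            (1 - f ⬝ᵥ (Matrix.diagonal fun i => (G.degree i : ℝ)).mulVec f)) *
          Real.sqrt (f ⬝ᵥ f)) :=
  vbar_norm_mu_f_general G lam v heig hnorm vbar hvbar f hf hfnorm
end

section
/- If v is a real vector indexed by the directed edges of G with Bv = λv and vᵀPv = 1, then ‖v̄‖² − ‖v‖² = λ, where v̄ = (v¹, …, vⁿ) with vⁱ = Σ_j a_{ij} v_{j→i}. -/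
open Matrix

theorem vbar_normsq_sub_v_normsq {V : Type*} [Fintype V] [DecidableEq V]
    (G : SimpleGraph V) [DecidableRel G.Adj] (lam : ℝ) (v : G.Dart → ℝ)
    (heig : (nbMatrix G).mulVec v = lam • v)
    (hnorm : v ⬝ᵥ (swapMat G).mulVec v = 1) :
    (fun i => vertSum G v i) ⬝ᵥ (fun i => vertSum G v i) - v ⬝ᵥ v = lam := by
  -- eigen relation pointwise
  have key : ∀ e : G.Dart, vertSum G v e.toProd.1 - v e.symm = lam * v e := by
    intro e
    have h := congrFun heig e
    have hmv : (nbMatrix G).mulVec v e = vertSum G v e.toProd.1 - v e.symm := by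
      unfold Matrix.mulVec dotProduct nbMatrix vertSum
      have : ∀ c : G.Dart,
          ((if c.toProd.2 = e.toProd.1 then (1:ℝ) else 0) *
            (if c.toProd.1 = e.toProd.2 then 0 else 1)) * v c =
          (if c.toProd.2 = e.toProd.1 then v c else 0) -
            (if c = e.symm then v c else 0) := by
        intro c
        by_cases h1 : c.toProd.2 = e.toProd.1
        · by_cases h2 : c.toProd.1 = e.toProd.2
          · have hc : c = e.symm := by
              apply SimpleGraph.Dart.ext
              rw [SimpleGraph.Dart.symm_toProd]
              exact Prod.ext h2 h1
            simp [h1, h2, hc]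
          · have hc : c ≠ e.symm := by
              intro hc
              apply h2
              rw [hc, SimpleGraph.Dart.symm_toProd, Prod.fst_swap]
            simp [h1, h2, hc]
        · have hc : c ≠ e.symm := by
            intro hc
            apply h1
            rw [hc, SimpleGraph.Dart.symm_toProd, Prod.snd_swap]
          simp [h1, hc]
      simp only [this, Finset.sum_sub_distrib]
      congr 1
      simp
    rw [hmv] at h
    simpa using h
  -- swap dot product
  have hswap : ∑ e : G.Dart, v e * v e.symm = 1 := by
    rw [← hnorm]
    unfold dotProduct Matrix.mulVec swapMat
    apply Finset.sum_congr rfl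
    intro e _
    congr 1
    simp [dotProduct]
  -- rewrite vbar norm
  have hbar : (fun i => vertSum G v i) ⬝ᵥ (fun i => vertSum G v i)
      = ∑ e : G.Dart, v e * vertSum G v e.toProd.2 := by
    unfold dotProduct
    have step : ∀ i : V, vertSum G v i * vertSum G v i
        = ∑ e : G.Dart, (if e.toProd.2 = i then v e else 0) * vertSum G v i := by
      intro i
      rw [← Finset.sum_mul]; rfl
    simp only [step]
    rw [Finset.sum_comm]
    apply Finset.sum_congr rfl
    intro e _
    rw [Finset.sum_eq_single e.toProd.2]
    · simp
    · intro b _ hb; simp [Ne.symm hb]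
    · simp
  have : ∀ e : G.Dart, v e * vertSum G v e.toProd.2
      = lam * (v e * v e.symm) + v e * v e := by
    intro e
    have h := key e.symm
    simp only [SimpleGraph.Dart.symm_symm, SimpleGraph.Dart.symm_toProd, Prod.fst_swap] at h
    have h2 : vertSum G v e.toProd.2 = lam * v e.symm + v e := by linarith
    rw [h2]; ring
  rw [hbar]
  simp only [this, Finset.sum_add_distrib, ← Finset.mul_sum, hswap]
  unfold dotProduct
  ring
end

section
/- If v is a real vector indexed by the directed edges of G with Bv = λv and vᵀPv = 1, then ‖v‖² (λ² + 1) + 2λ = Σ_i d_i (vⁱ)² = v̄ᵀ D v̄, where vⁱ = Σ_j a_{ij} v_{j→i}, v̄ = (v¹, …, vⁿ), d_i is the degree of node i, and D is the diagonal matrix of node degrees. -/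
open Matrix

section Aux
variable {V : Type*} [Fintype V] [DecidableEq V] (G : SimpleGraph V) [DecidableRel G.Adj]

set_option linter.unusedSectionVars false

lemma symm_bij : Function.Bijective (fun e : G.Dart => e.symm) :=
  Function.Involutive.bijective (fun d => SimpleGraph.Dart.symm_symm d)

lemma sum_symm (f : G.Dart → ℝ) : ∑ e : G.Dart, f e.symm = ∑ e : G.Dart, f e :=
  Fintype.sum_bijective _ (symm_bij G) _ _ (fun _ => rfl)

lemma key {lam : ℝ} {v : G.Dart → ℝ} (heig : (nbMatrix G).mulVec v = lam • v)
    (e : G.Dart) : vertSum G v e.toProd.1 = lam * v e + v e.symm := by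
  have h := congrFun heig e
  simp only [Matrix.mulVec, dotProduct, nbMatrix, Pi.smul_apply, smul_eq_mul] at h
  have hterm : ∀ c : G.Dart,
      (if c.toProd.2 = e.toProd.1 then (1:ℝ) else 0) *
        (if c.toProd.1 = e.toProd.2 then (0:ℝ) else 1) * v c
      = (if c.toProd.2 = e.toProd.1 then v c else 0) - (if c = e.symm then v c else 0) := by
    intro c
    by_cases h1 : c = e.symm
    · subst h1; simp [SimpleGraph.Dart.symm_toProd]
    · by_cases h2 : c.toProd.2 = e.toProd.1
      · have h3 : c.toProd.1 ≠ e.toProd.2 := by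
          intro h3
          exact h1 (SimpleGraph.Dart.ext _ _ (Prod.ext h3 h2))
        simp [h2, h3, h1]
      · have h4 : c ≠ e.symm := by
          intro h4; subst h4; exact h2 rfl
        simp [h2, h4]
  rw [Finset.sum_congr rfl (fun c _ => hterm c), Finset.sum_sub_distrib,
    Finset.sum_ite_eq' Finset.univ e.symm v] at h
  simp only [Finset.mem_univ, if_true] at h
  have : vertSum G v e.toProd.1 - v e.symm = lam * v e := h
  linarith

lemma swap_dot (v : G.Dart → ℝ) :
    v ⬝ᵥ (swapMat G).mulVec v = ∑ e : G.Dart, v e * v e.symm := by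
  simp only [dotProduct, Matrix.mulVec, swapMat, dotProduct]
  refine Finset.sum_congr rfl fun e _ => ?_
  rw [Finset.sum_congr rfl (fun s _ => by rw [ite_mul, one_mul, zero_mul]),
    Finset.sum_ite_eq' Finset.univ e.symm v]
  simp

lemma snd_fiber_card (i : V) :
    (Finset.univ.filter fun e : G.Dart => e.toProd.2 = i).card = G.degree i := by
  rw [← SimpleGraph.dart_fst_fiber_card_eq_degree G i]
  apply Finset.card_bij (fun e _ => e.symm)
  · intro e he; simp only [Finset.mem_filter, Finset.mem_univ, true_and] at he ⊢
    exact he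
  · intro a _ b _ h
    have := congrArg SimpleGraph.Dart.symm h
    simpa [SimpleGraph.Dart.symm_symm] using this
  · intro b hb
    refine ⟨b.symm, ?_, (SimpleGraph.Dart.symm_symm b).symm⟩
    simp only [Finset.mem_filter, Finset.mem_univ, true_and] at hb ⊢
    exact hb

end Aux

theorem v_normsq_degree_identity {V : Type*} [Fintype V] [DecidableEq V]
    (G : SimpleGraph V) [DecidableRel G.Adj] (lam : ℝ) (v : G.Dart → ℝ)
    (heig : (nbMatrix G).mulVec v = lam • v)
    (hnorm : v ⬝ᵥ (swapMat G).mulVec v = 1) :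
    (v ⬝ᵥ v) * (lam ^ 2 + 1) + 2 * lam = ∑ i, (G.degree i : ℝ) * (vertSum G v i) ^ 2 ∧
    (∑ i, (G.degree i : ℝ) * (vertSum G v i) ^ 2) =
      (fun i => vertSum G v i) ⬝ᵥ
        (Matrix.diagonal fun i => (G.degree i : ℝ)).mulVec (fun i => vertSum G v i) := by
  constructor
  · have h1 : ∑ e : G.Dart, (vertSum G v e.toProd.2) ^ 2
        = ∑ i, (G.degree i : ℝ) * (vertSum G v i) ^ 2 := by
      rw [← Finset.sum_fiberwise_of_maps_to (g := fun e : G.Dart => e.toProd.2)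
        (fun e _ => Finset.mem_univ _) (fun e => (vertSum G v e.toProd.2) ^ 2)]
      refine Finset.sum_congr rfl fun i _ => ?_
      rw [Finset.sum_congr rfl (fun e he => by
        rw [(Finset.mem_filter.mp he).2]), Finset.sum_const, snd_fiber_card G i,
        nsmul_eq_mul]
    have h2 : ∑ e : G.Dart, (vertSum G v e.toProd.1) ^ 2
        = ∑ e : G.Dart, (vertSum G v e.toProd.2) ^ 2 := by
      rw [← sum_symm G (fun e => (vertSum G v e.toProd.2) ^ 2)]
      simp [SimpleGraph.Dart.symm_toProd]
    have h3 : ∑ e : G.Dart, (vertSum G v e.toProd.1) ^ 2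
        = lam ^ 2 * (∑ e : G.Dart, v e ^ 2)
          + 2 * lam * (∑ e : G.Dart, v e * v e.symm)
          + ∑ e : G.Dart, v e.symm ^ 2 := by
      rw [Finset.sum_congr rfl (fun e _ => by rw [key G heig e])]
      rw [Finset.sum_congr rfl (fun e _ => by
        show (lam * v e + v e.symm) ^ 2
            = lam ^ 2 * v e ^ 2 + 2 * lam * (v e * v e.symm) + v e.symm ^ 2
        ring)]
      rw [Finset.sum_add_distrib, Finset.sum_add_distrib, ← Finset.mul_sum,
        ← Finset.mul_sum]
    have h4 : ∑ e : G.Dart, v e.symm ^ 2 = ∑ e : G.Dart, v e ^ 2 :=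
      sum_symm G (fun e => v e ^ 2)
    have h5 : ∑ e : G.Dart, v e * v e.symm = 1 := by
      rw [← swap_dot G v]; exact hnorm
    have h6 : v ⬝ᵥ v = ∑ e : G.Dart, v e ^ 2 := by
      simp [dotProduct, sq]
    rw [← h1, ← h2, h3, h4, h5, h6]; ring
  · simp only [dotProduct, Matrix.mulVec_diagonal]
    refine Finset.sum_congr rfl fun i _ => ?_
    ring
end
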